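/- Suppose at each node of a path p = [v_0, ..., v_L] from O to D in a finite weighted graph, a policy π selects v_{i+1} from nbr(v_i), and at each v_i the RankPres property holds and π picks the unique maximizer of Q*(v_i, ·). Then the path p is a shortest path from O to D, and the total length of p satisfies d_p(O,D)/d_sp(O,D) = 1 ≤ ζ(O,D)(1+ε) for any ε ≥ 0, so the path satisfies the APNSP accuracy criterion η(O,D) = 1. -/
import Mathlib


/-- If along a path `p = [v_0,...,v_L]` from `O` to `D` the policy
at each node picks the unique maximizer of `Q*(v,·) = -(w(v,·) + d_sp(·,D))`
(RankPres/Bellman holding at each node), then `p` is a shortest path from `O`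
to `D`: its length equals `d_sp(O,D)`, so `d_p(O,D)/d_sp(O,D) = 1 ≤
ζ(O,D)(1+ε)` for any `ε ≥ 0`, i.e. the APNSP accuracy criterion `η(O,D) = 1`
holds. Edge weights are the Euclidean lengths `w u v = dist (pos u) (pos v)`. -/
theorem argmax_policy_path_is_shortest_and_apnsp (V : Type*) [Fintype V]
    (nbr : V → Finset V) (pos : V → EuclideanSpace ℝ (Fin 2))
    (hinj : Function.Injective pos)
    (O D : V) (hOD : O ≠ D)
    (dsp : V → ℝ) (hD0 : dsp D = 0)
    (hbell_le : ∀ v, v ≠ D → ∀ u ∈ nbr v,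
      dsp v ≤ dist (pos v) (pos u) + dsp u)
    (hbell_ex : ∀ v, v ≠ D → ∃ u ∈ nbr v,
      dist (pos v) (pos u) + dsp u = dsp v)
    (L : ℕ) (seq : Fin (L + 1) → V)
    (hO : seq 0 = O) (hDend : seq (Fin.last L) = D)
    (hnotD : ∀ i : Fin L, seq i.castSucc ≠ D)
    (hstep : ∀ i : Fin L, seq i.succ ∈ nbr (seq i.castSucc) ∧
      ∀ u ∈ nbr (seq i.castSucc), u ≠ seq i.succ →
        -(dist (pos (seq i.castSucc)) (pos u) + dsp u) <
          -(dist (pos (seq i.castSucc)) (pos (seq i.succ)) + dsp (seq i.succ))) :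
    (∑ i : Fin L, dist (pos (seq i.castSucc)) (pos (seq i.succ))) = dsp O ∧
    (∑ i : Fin L, dist (pos (seq i.castSucc)) (pos (seq i.succ))) / dsp O = 1 ∧
    ∀ ε : ℝ, 0 ≤ ε →
      (∑ i : Fin L, dist (pos (seq i.castSucc)) (pos (seq i.succ))) / dsp O ≤
        (dsp O / dist (pos O) (pos D)) * (1 + ε) := by

  classical
  set g : ℕ → V := fun n => seq ⟨min n L, Nat.lt_succ_of_le (min_le_right _ _)⟩ with hg
  have hgc : ∀ i : Fin L, g (i : ℕ) = seq i.castSucc := by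
    intro i
    simp only [g]
    congr 1
    exact Fin.ext (Nat.min_eq_left i.isLt.le)
  have hgs : ∀ i : Fin L, g ((i : ℕ) + 1) = seq i.succ := by
    intro i
    simp only [g]
    congr 1
    exact Fin.ext (Nat.min_eq_left i.isLt)
  have hg0 : g 0 = O := by
    simp only [g]
    rw [← hO]
    congr 1
  have hgL : g L = D := by
    simp only [g]
    rw [← hDend]
    congr 1
    exact Fin.ext (Nat.min_self L)
  have hkey : ∀ i : Fin L, dist (pos (seq i.castSucc)) (pos (seq i.succ))
      = dsp (seq i.castSucc) - dsp (seq i.succ) := by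
    intro i
    have hne := hnotD i
    obtain ⟨u, hu, hequ⟩ := hbell_ex _ hne
    obtain ⟨hmem, hmax⟩ := hstep i
    have hle := hbell_le _ hne _ hmem
    by_cases h : u = seq i.succ
    · subst h; linarith
    · have := hmax u hu h
      linarith
  have hrw : (∑ i : Fin L, dist (pos (seq i.castSucc)) (pos (seq i.succ)))
      = ∑ i ∈ Finset.range L, dist (pos (g i)) (pos (g (i + 1))) := by
    rw [← Fin.sum_univ_eq_sum_range (fun n => dist (pos (g n)) (pos (g (n + 1)))) L]
    exact Finset.sum_congr rfl fun i _ => by rw [hgc i, hgs i]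
  have hsum : (∑ i : Fin L, dist (pos (seq i.castSucc)) (pos (seq i.succ))) = dsp O := by
    rw [hrw]
    have : ∑ i ∈ Finset.range L, dist (pos (g i)) (pos (g (i + 1)))
        = ∑ i ∈ Finset.range L, (dsp (g i) - dsp (g (i + 1))) := by
      apply Finset.sum_congr rfl
      intro i hi
      have hiL : i < L := Finset.mem_range.mp hi
      have := hkey ⟨i, hiL⟩
      rw [← hgc ⟨i, hiL⟩, ← hgs ⟨i, hiL⟩] at this
      exact this
    rw [this, Finset.sum_range_sub' (fun n => dsp (g n)) L, hg0, hgL, hD0, sub_zero]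
  have hposOD : pos O ≠ pos D := fun h => hOD (hinj h)
  have hdistpos : 0 < dist (pos O) (pos D) := dist_pos.mpr hposOD
  have hge : dist (pos O) (pos D) ≤ dsp O := by
    have := dist_le_range_sum_dist (fun n => pos (g n)) L
    simp only [hg0, hgL] at this
    rw [← hsum, hrw]
    exact this
  have hO0 : dsp O ≠ 0 := (lt_of_lt_of_le hdistpos hge).ne'
  refine ⟨hsum, by rw [hsum]; exact div_self hO0, ?_⟩
  intro ε hε
  rw [hsum, div_self hO0]
  have h1 : (1 : ℝ) ≤ dsp O / dist (pos O) (pos D) := (one_le_div hdistpos).mpr hge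
  nlinarith
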